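/- arXiv:1808.07855 — 2 statements merged into one kernel-verified Lean document; each statement's English description precedes it below -/
import Mathlib

section
/- Let F be a finite field with q elements and let n ≥ 1. The characteristic polynomial of the hyperplane matroid U_{n,0}(q) is χ(t) = ∏_{j=0}^{n−1} (t − q^j). -/
open Matroid Polynomial

/-- The rank of a set in a matroid: the supremum of the cardinalities of its
independent subsets. -/
noncomputable def Matroid.rankOf {α : Type*} (M : Matroid α) (S : Set α) : ℕ :=
  sSup {k | ∃ I, I ⊆ S ∧ M.Indep I ∧ I.ncard = k}

/-- The characteristic polynomial of a (finite) matroid: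
`χ_M(t) = ∑_{S ⊆ E} (−1)^{|S|} t^{rk M − rk S}`. -/
noncomputable def Matroid.charPoly {α : Type*} (M : Matroid α) : Polynomial ℤ :=
  ∑ᶠ S ∈ {S : Set α | S ⊆ M.E},
    (-1 : ℤ) ^ S.ncard • (X : Polynomial ℤ) ^ (M.rankOf M.E - M.rankOf S)

open Module Matrix




lemma count_spanning (F : Type) [Field F] [Fintype F] {n m : ℕ} (hnm : n ≤ m) :
    Nat.card {v : Fin m → (Fin n → F) // Submodule.span F (Set.range v) = ⊤} =
      ∏ j ∈ Finset.range n, (Fintype.card F ^ m - Fintype.card F ^ j) := by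
  classical
  have key : ∀ v : Fin m → (Fin n → F),
      Submodule.span F (Set.range v) = ⊤ ↔
        LinearIndependent F (fun (i : Fin n) (j : Fin m) => v j i) := by
    intro v
    have h1 : Matrix.rank (Matrix.of v) = finrank F (Submodule.span F (Set.range v)) :=
      Matrix.rank_eq_finrank_span_row (Matrix.of v)
    have h2 : Matrix.rank (Matrix.of v)ᵀ = Matrix.rank (Matrix.of v) := Matrix.rank_transpose _
    have h3 : Matrix.rank (Matrix.of v)ᵀ
        = finrank F (Submodule.span F (Set.range (fun (i : Fin n) (j : Fin m) => v j i))) :=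
      Matrix.rank_eq_finrank_span_row _
    rw [linearIndependent_iff_card_eq_finrank_span]
    unfold Set.finrank
    rw [← h3, h2, h1, Fintype.card_fin]
    constructor
    · intro h
      rw [h, finrank_top, finrank_fin_fun]
    · intro h
      exact Submodule.eq_top_of_finrank_eq (by rw [← h, finrank_fin_fun])
  have e : {v : Fin m → (Fin n → F) // Submodule.span F (Set.range v) = ⊤} ≃
      {s : Fin n → (Fin m → F) // LinearIndependent F s} :=
    Equiv.subtypeEquiv ⟨fun v i j => v j i, fun s j i => s i j, fun _ => rfl, fun _ => rfl⟩
      (by intro v; exact key v)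
  rw [Nat.card_congr e, card_linearIndependent (by rw [finrank_fin_fun]; exact hnm)]
  rw [finrank_fin_fun, ← Fin.prod_univ_eq_prod_range]

lemma hv_empty_iff (F : Type) [Field F] [Fintype F] {n m : ℕ} (hn : 1 ≤ n)
    (E0 : Finset (Submodule F (Fin n → F)))
    (hE0 : ∀ H, H ∈ E0 ↔ finrank F ↥H + 1 = n) (v : Fin m → (Fin n → F))
    [DecidablePred fun H : Submodule F (Fin n → F) => ∀ i, v i ∈ H] :
    (E0.filter (fun H => ∀ i, v i ∈ H)) = ∅ ↔ Submodule.span F (Set.range v) = ⊤ := by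
  constructor
  · intro h
    by_contra hne
    obtain ⟨φ, φ0, hle⟩ := Submodule.exists_le_ker_of_lt_top _ (lt_top_iff_ne_top.2 hne)
    have hsurj : Function.Surjective φ := by
      obtain ⟨x, hx⟩ : ∃ x, φ x ≠ 0 := by
        by_contra hc
        push_neg at hc
        exact φ0 (LinearMap.ext fun x => hc x)
      intro c
      refine ⟨(c * (φ x)⁻¹) • x, ?_⟩
      rw [LinearMap.map_smul, smul_eq_mul, mul_assoc, inv_mul_cancel₀ hx, mul_one]
    have hker : finrank F ↥(LinearMap.ker φ) + 1 = n := by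
      have := LinearMap.finrank_range_add_finrank_ker φ
      rw [LinearMap.range_eq_top.2 hsurj, finrank_top, finrank_self, finrank_fin_fun] at this
      omega
    have : LinearMap.ker φ ∈ E0.filter (fun H => ∀ i, v i ∈ H) := by
      refine Finset.mem_filter.2 ⟨(hE0 _).2 hker, fun i => ?_⟩
      exact hle (Submodule.subset_span (Set.mem_range_self i))
    rw [h] at this
    exact absurd this (Finset.notMem_empty _)
  · intro h
    rw [Finset.eq_empty_iff_forall_notMem]
    intro H hH
    rw [Finset.mem_filter] at hH
    obtain ⟨hH1, hH2⟩ := hH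
    have hle : Submodule.span F (Set.range v) ≤ H :=
      Submodule.span_le.2 (Set.range_subset_iff.2 hH2)
    rw [h, top_le_iff] at hle
    have := (hE0 _).1 hH1
    rw [hle, finrank_top, finrank_fin_fun] at this
    omega

lemma ie_count (F : Type) [Field F] [Fintype F] {n m : ℕ} (hn : 1 ≤ n) (hnm : n ≤ m)
    (E0 : Finset (Submodule F (Fin n → F)))
    (hE0 : ∀ H, H ∈ E0 ↔ finrank F ↥H + 1 = n) :
    ∑ T ∈ E0.powerset,
        (-1 : ℤ) ^ T.card * (Fintype.card F : ℤ) ^ (m * finrank F ↥(sInf (↑T : Set (Submodule F (Fin n → F))))) =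
      ∏ j ∈ Finset.range n, ((Fintype.card F : ℤ) ^ m - (Fintype.card F : ℤ) ^ j) := by
  classical
  set V := Fin n → F
  set c := Fintype.card F with hc
  -- step 1 : each power counts tuples
  have step1 : ∀ T : Finset (Submodule F V),
      (c : ℤ) ^ (m * finrank F ↥(sInf (↑T : Set (Submodule F (Fin n → F))))) =
        ((Finset.univ.filter (fun v : Fin m → V => ∀ i, v i ∈ sInf (↑T : Set (Submodule F (Fin n → F))))).card : ℤ) := by
    intro T
    have : (Finset.univ.filter (fun v : Fin m → V => ∀ i, v i ∈ sInf (↑T : Set (Submodule F (Fin n → F))))).card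
        = Fintype.card {v : Fin m → V // ∀ i, v i ∈ sInf (↑T : Set (Submodule F (Fin n → F)))} :=
      (Fintype.card_subtype _).symm
    rw [this]
    have e : {v : Fin m → V // ∀ i, v i ∈ sInf (↑T : Set (Submodule F (Fin n → F)))} ≃
        (Fin m → ↥(sInf (↑T : Set (Submodule F (Fin n → F))))) :=
      { toFun := fun x i => ⟨x.1 i, x.2 i⟩
        invFun := fun f => ⟨fun i => (f i).1, fun i => (f i).2⟩
        left_inv := fun x => rfl
        right_inv := fun f => rfl }
    rw [Fintype.card_congr e, Fintype.card_fun, Fintype.card_fin,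
      card_eq_pow_finrank (K := F), ← pow_mul, mul_comm]
    push_cast
    rfl
  calc
    ∑ T ∈ E0.powerset, (-1 : ℤ) ^ T.card * (c : ℤ) ^ (m * finrank F ↥(sInf (↑T : Set (Submodule F (Fin n → F)))))
        = ∑ T ∈ E0.powerset, ∑ _v ∈ Finset.univ.filter
            (fun v : Fin m → V => ∀ i, v i ∈ sInf (↑T : Set (Submodule F (Fin n → F)))), (-1 : ℤ) ^ T.card := by
          refine Finset.sum_congr rfl fun T _ => ?_
          rw [Finset.sum_const, nsmul_eq_mul, step1, mul_comm]
    _ = ∑ v : Fin m → V, ∑ T ∈ (E0.filter (fun H => ∀ i, v i ∈ H)).powerset,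
          (-1 : ℤ) ^ T.card := by
          rw [Finset.sum_sigma', Finset.sum_sigma']
          refine Finset.sum_nbij' (fun x => ⟨x.2, x.1⟩) (fun x => ⟨x.2, x.1⟩) ?_ ?_
            (fun _ _ => rfl) (fun _ _ => rfl) (fun _ _ => rfl)
          · rintro ⟨T, v⟩ hx
            rw [Finset.mem_sigma, Finset.mem_powerset, Finset.mem_filter] at hx
            rw [Finset.mem_sigma, Finset.mem_powerset]
            exact ⟨Finset.mem_univ _, fun H hH => Finset.mem_filter.2
              ⟨hx.1 hH, fun i => Submodule.mem_sInf.1 (hx.2.2 i) H (Finset.mem_coe.2 hH)⟩⟩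
          · rintro ⟨v, T⟩ hx
            rw [Finset.mem_sigma, Finset.mem_powerset] at hx
            rw [Finset.mem_sigma, Finset.mem_powerset, Finset.mem_filter]
            exact ⟨fun H hH => (Finset.mem_filter.1 (hx.2 hH)).1, Finset.mem_univ _,
              fun i => Submodule.mem_sInf.2 fun H hH =>
                (Finset.mem_filter.1 (hx.2 (Finset.mem_coe.1 hH))).2 i⟩
    _ = ∑ v : Fin m → V,
          (if (E0.filter (fun H => ∀ i, v i ∈ H)) = ∅ then (1 : ℤ) else 0) := by
          refine Finset.sum_congr rfl fun v _ => ?_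
          exact Finset.sum_powerset_neg_one_pow_card
    _ = ((Finset.univ.filter
          (fun v : Fin m → V => Submodule.span F (Set.range v) = ⊤)).card : ℤ) := by
          rw [Finset.sum_boole]
          norm_cast
          congr 1
          exact Finset.filter_congr fun v _ => hv_empty_iff F hn E0 hE0 v
    _ = ∏ j ∈ Finset.range n, ((c : ℤ) ^ m - (c : ℤ) ^ j) := by
          have h1 : (Finset.univ.filter
              (fun v : Fin m → V => Submodule.span F (Set.range v) = ⊤)).card
              = Nat.card {v : Fin m → V // Submodule.span F (Set.range v) = ⊤} := by
            rw [Nat.card_eq_fintype_card, Fintype.card_subtype]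
          rw [h1, count_spanning F hnm, Nat.cast_prod]
          refine Finset.prod_congr rfl fun j hj => ?_
          rw [Nat.cast_sub (Nat.pow_le_pow_right Fintype.card_pos
            (le_trans (le_of_lt (Finset.mem_range.1 hj)) hnm))]
          push_cast
          rfl


-- cutting a subspace by a hyperplane not containing it drops dimension by one
lemma hyp_cut (F : Type) [Field F] [Fintype F] {n : ℕ}
    (W H : Submodule F (Fin n → F)) (hH : finrank F ↥H + 1 = n) (hWH : ¬ W ≤ H) :
    finrank F ↥(W ⊓ H) + 1 = finrank F ↥W := by
  have hlt : H < W ⊔ H := lt_of_le_of_ne le_sup_right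
    (fun h => hWH (le_of_le_of_eq le_sup_left h.symm))
  have h1 : finrank F ↥H < finrank F ↥(W ⊔ H) := Submodule.finrank_lt_finrank_of_lt hlt
  have h2 : finrank F ↥(W ⊔ H) ≤ n := by
    have := Submodule.finrank_le (W ⊔ H)
    rwa [finrank_fin_fun] at this
  have htop : finrank F ↥(W ⊔ H) = n := by omega
  have := Submodule.finrank_sup_add_finrank_inf_eq W H
  omega

-- the intersection of all hyperplanes is trivial
lemma sInf_hyperplanes (F : Type) [Field F] [Fintype F] {n : ℕ} (hn : 1 ≤ n) :
    sInf {H : Submodule F (Fin n → F) | finrank F ↥H + 1 = n} = ⊥ := by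
  refine le_antisymm (fun x hx => ?_) bot_le
  have hker : ∀ i : Fin n, finrank F ↥(LinearMap.ker (LinearMap.proj (R := F)
      (φ := fun _ : Fin n => F) i)) + 1 = n := by
    intro i
    have hsurj : Function.Surjective (LinearMap.proj (R := F) (φ := fun _ : Fin n => F) i) :=
      fun c => ⟨fun _ => c, rfl⟩
    have := LinearMap.finrank_range_add_finrank_ker
      (LinearMap.proj (R := F) (φ := fun _ : Fin n => F) i)
    rw [LinearMap.range_eq_top.2 hsurj, finrank_top, finrank_self, finrank_fin_fun] at this
    omega
  have : ∀ i : Fin n, x ∈ LinearMap.ker (LinearMap.proj (R := F) (φ := fun _ : Fin n => F) i) :=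
    fun i => (Submodule.mem_sInf.1 hx) _ (hker i)
  have hx0 : x = 0 := funext fun i => this i
  simp [hx0]

-- the rank formula
lemma rank_formula (F : Type) [Field F] [Fintype F] {n : ℕ}
    (M : Matroid (Submodule F (Fin n → F)))
    (hE : M.E = {H : Submodule F (Fin n → F) | finrank F ↥H + 1 = n})
    (hIndep : ∀ S : Set (Submodule F (Fin n → F)), M.Indep S ↔
      S ⊆ {H : Submodule F (Fin n → F) | finrank F ↥H + 1 = n} ∧
        finrank F ↥(sInf S) + S.ncard = n)
    (S : Set (Submodule F (Fin n → F))) (hS : S ⊆ M.E) :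
    M.rankOf S = n - finrank F ↥(sInf S) := by
  classical
  haveI : Finite (Submodule F (Fin n → F)) :=
    Finite.of_injective _ SetLike.coe_injective
  obtain ⟨I, hI⟩ := M.exists_isBasis S hS
  obtain ⟨hIhyp, hIsum⟩ := (hIndep I).1 hI.indep
  have hle : ∀ H ∈ S, sInf I ≤ H := by
    intro H hH
    by_contra hcon
    have hH_hyp : finrank F ↥H + 1 = n := by
      have := hS hH; rwa [hE] at this
    have hHI : H ∉ I := fun h => hcon (sInf_le h)
    have hins : M.Indep (insert H I) := by
      rw [hIndep]
      refine ⟨fun K hK => ?_, ?_⟩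
      · rcases hK with rfl | hK
        · exact hH_hyp
        · exact hIhyp hK
      · rw [sInf_insert]
        have hcut := hyp_cut F (sInf I) H hH_hyp hcon
        have hcard : (insert H I).ncard = I.ncard + 1 :=
          Set.ncard_insert_of_notMem hHI (Set.toFinite I)
        have hcomm : H ⊓ sInf I = sInf I ⊓ H := inf_comm _ _
        rw [hcomm, hcard]
        omega
    exact hHI (hI.mem_of_insert_indep hH hins)
  have hinf_eq : sInf I = sInf S := le_antisymm (le_sInf hle) (sInf_le_sInf hI.subset)
  have hub : ∀ k ∈ {k | ∃ I', I' ⊆ S ∧ M.Indep I' ∧ I'.ncard = k},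
      k ≤ n - finrank F ↥(sInf S) := by
    rintro k ⟨I', hI'S, hI'ind, rfl⟩
    obtain ⟨_, hsum'⟩ := (hIndep I').1 hI'ind
    have hmono : finrank F ↥(sInf S) ≤ finrank F ↥(sInf I') :=
      Submodule.finrank_mono (sInf_le_sInf hI'S)
    omega
  have hmem : (n - finrank F ↥(sInf S)) ∈
      {k | ∃ I', I' ⊆ S ∧ M.Indep I' ∧ I'.ncard = k} := by
    refine ⟨I, hI.subset, hI.indep, ?_⟩
    rw [hinf_eq] at hIsum
    omega
  rw [Matroid.rankOf]
  exact le_antisymm (csSup_le ⟨_, hmem⟩ hub) (le_csSup ⟨_, hub⟩ hmem)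

/-- The characteristic polynomial of the matroid `U_{n,0}(q)` of all hyperplanes of
`F^n`, where `F` is a finite field with `q` elements and `n ≥ 1`, is
`χ(t) = ∏_{j=0}^{n−1} (t − q^j)`. -/
theorem hyperplane_matroid_charPoly (F : Type) [Field F] [Fintype F] (q : ℕ)
    (hq : Fintype.card F = q) (n : ℕ) (hn : 1 ≤ n)
    (M : Matroid (Submodule F (Fin n → F)))
    (hE : M.E = {H : Submodule F (Fin n → F) | Module.finrank F H + 1 = n})
    (hIndep : ∀ S : Set (Submodule F (Fin n → F)), M.Indep S ↔
      S ⊆ {H : Submodule F (Fin n → F) | Module.finrank F H + 1 = n} ∧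
        Module.finrank F ↥(sInf S) + S.ncard = n) :
    M.charPoly = ∏ j ∈ Finset.range n, ((X : Polynomial ℤ) - C ((q : ℤ) ^ j)) := by
  classical
  subst hq
  haveI : Finite (Submodule F (Fin n → F)) :=
    Finite.of_injective _ SetLike.coe_injective
  haveI : Fintype (Submodule F (Fin n → F)) := Fintype.ofFinite _
  set E0 : Finset (Submodule F (Fin n → F)) := Set.toFinset M.E with hE0def
  have hE0 : ∀ H, H ∈ E0 ↔ finrank F ↥H + 1 = n := by
    intro H
    rw [hE0def, Set.mem_toFinset, hE]
    rfl
  have hdle : ∀ S : Set (Submodule F (Fin n → F)), finrank F ↥(sInf S) ≤ n := by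
    intro S
    have := Submodule.finrank_le (sInf S)
    rwa [finrank_fin_fun] at this
  have hrankE : M.rankOf M.E = n := by
    rw [rank_formula F M hE hIndep M.E (subset_refl _), hE, sInf_hyperplanes F hn, finrank_bot]
    omega
  have hsum : M.charPoly = ∑ T ∈ E0.powerset,
      (-1 : ℤ) ^ T.card •
        (X : Polynomial ℤ) ^ (finrank F ↥(sInf (↑T : Set (Submodule F (Fin n → F))))) := by
    rw [Matroid.charPoly]
    have hset : {S : Set (Submodule F (Fin n → F)) | S ⊆ M.E} =
        ↑(E0.powerset.image
          (fun T : Finset (Submodule F (Fin n → F)) => (↑T : Set (Submodule F (Fin n → F))))) := by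
      ext S
      simp only [Set.mem_setOf_eq, Finset.coe_image, Set.mem_image, Finset.mem_coe,
        Finset.mem_powerset]
      constructor
      · intro hS
        refine ⟨S.toFinset, fun x hx => ?_, Set.coe_toFinset S⟩
        rw [Set.mem_toFinset] at hx
        rw [hE0def, Set.mem_toFinset]
        exact hS hx
      · rintro ⟨T, hT, rfl⟩
        intro x hx
        have := hT hx
        rwa [hE0def, Set.mem_toFinset] at this
    rw [hset, finsum_mem_coe_finset,
      Finset.sum_image (fun a _ b _ h => Finset.coe_injective h)]
    refine Finset.sum_congr rfl fun T hT => ?_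
    rw [Set.ncard_coe_finset]
    have hTsub : (↑T : Set (Submodule F (Fin n → F))) ⊆ M.E := by
      intro x hx
      have := (Finset.mem_powerset.1 hT) (Finset.mem_coe.1 hx)
      rwa [hE0def, Set.mem_toFinset] at this
    rw [hrankE, rank_formula F M hE hIndep _ hTsub,
      Nat.sub_sub_self (hdle (↑T : Set (Submodule F (Fin n → F))))]
  rw [hsum]
  apply Polynomial.eq_of_infinite_eval_eq
  apply Set.infinite_of_injective_forall_mem
    (f := fun m : ℕ => ((Fintype.card F : ℤ)) ^ (n + m))
  case hi =>
    intro a b hab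
    have h2 : 2 ≤ Fintype.card F := Fintype.one_lt_card
    have : (Fintype.card F) ^ (n + a) = (Fintype.card F) ^ (n + b) := by
      have := hab
      simp only [← Nat.cast_pow] at this
      exact_mod_cast this
    have := Nat.pow_right_injective h2 this
    omega
  intro m
  simp only [Set.mem_setOf_eq, eval_finset_sum, eval_prod, eval_sub, eval_pow, eval_X, eval_C,
    eval_smul, smul_eq_mul]
  simp only [← pow_mul]
  exact ie_count F hn (Nat.le_add_right n m) E0 hE0
end

section
/- Let M be a finite matroid of rank r on a nonempty ground set, and for 1 ≤ d ≤ r let M' be the truncation of M to rank d (independent sets of M' are the independent sets of M of cardinality at most d). Then (t−1) divides both χ_M(t) and χ_{M'}(t) in ℤ[t], and writing χ_M(t) = (t−1)·χ̄_M(t) and χ_{M'}(t) = (t−1)·χ̄_{M'}(t), for every 0 ≤ i ≤ d−1 the coefficient of t^{d−1−i} in χ̄_{M'} equals the coefficient of t^{r−1−i} in χ̄_M. -/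
open Matroid Polynomial

section Aux

variable {α : Type*} {M : Matroid α}

lemma rankSet_nonempty (S : Set α) :
    {k | ∃ I, I ⊆ S ∧ M.Indep I ∧ I.ncard = k}.Nonempty :=
  ⟨0, ∅, Set.empty_subset _, M.empty_indep, Set.ncard_empty α⟩

lemma rankSet_bddAbove (hfin : M.Finite) (S : Set α) :
    BddAbove {k | ∃ I, I ⊆ S ∧ M.Indep I ∧ I.ncard = k} := by
  haveI := hfin
  refine ⟨M.E.ncard, ?_⟩
  rintro k ⟨I, -, hI, rfl⟩
  exact Set.ncard_le_ncard hI.subset_ground M.ground_finite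

lemma rankOf_le_iff (hfin : M.Finite) {S : Set α} {k : ℕ} :
    M.rankOf S ≤ k ↔ ∀ I, I ⊆ S → M.Indep I → I.ncard ≤ k := by
  rw [Matroid.rankOf, csSup_le_iff (rankSet_bddAbove hfin S) (rankSet_nonempty S)]
  constructor
  · intro h I hIS hI
    exact h _ ⟨I, hIS, hI, rfl⟩
  · rintro h k ⟨I, hIS, hI, rfl⟩
    exact h I hIS hI

lemma ncard_le_rankOf (hfin : M.Finite) {S I : Set α} (hIS : I ⊆ S) (hI : M.Indep I) :
    I.ncard ≤ M.rankOf S :=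
  le_csSup (rankSet_bddAbove hfin S) ⟨I, hIS, hI, rfl⟩

lemma rankOf_mem (hfin : M.Finite) (S : Set α) :
    ∃ I, I ⊆ S ∧ M.Indep I ∧ I.ncard = M.rankOf S :=
  Nat.sSup_mem (rankSet_nonempty S) (rankSet_bddAbove hfin S)

lemma coeff_geomSum (n m : ℕ) :
    (∑ k ∈ Finset.range n, (X : Polynomial ℤ) ^ k).coeff m = if m < n then 1 else 0 := by
  rw [Polynomial.finset_sum_coeff]
  simp only [Polynomial.coeff_X_pow]
  simp only [eq_comm (a := m)]
  rw [Finset.sum_ite_eq' (Finset.range n) m (fun _ => (1 : ℤ))]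
  simp [Finset.mem_range]

end Aux

/-- Let `M` be a finite matroid of rank `r` on a nonempty ground set and, for
`1 ≤ d ≤ r`, let `M'` be the truncation of `M` to rank `d`.  Then `(t−1)` divides both
`χ_M` and `χ_{M'}`, and writing `χ_M = (t−1)·χ̄_M` and `χ_{M'} = (t−1)·χ̄_{M'}`, for
every `0 ≤ i ≤ d−1` the coefficient of `t^{d−1−i}` in `χ̄_{M'}` equals the coefficient
of `t^{r−1−i}` in `χ̄_M`. -/
theorem truncation_reduced_charPoly {α : Type*} (M : Matroid α) (hfin : M.Finite)
    (hne : M.E.Nonempty) (r : ℕ) (hr : M.rankOf M.E = r) (d : ℕ) (hd : 1 ≤ d)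
    (hdr : d ≤ r) (M' : Matroid α) (hE' : M'.E = M.E)
    (hIndep' : ∀ I : Set α, M'.Indep I ↔ M.Indep I ∧ I.ncard ≤ d) :
    ∃ p p' : Polynomial ℤ,
      M.charPoly = ((X : Polynomial ℤ) - 1) * p ∧
      M'.charPoly = ((X : Polynomial ℤ) - 1) * p' ∧
      ∀ i : ℕ, i ≤ d - 1 → p'.coeff (d - 1 - i) = p.coeff (r - 1 - i) := by
  classical
  haveI := hfin
  have hEfin : M.E.Finite := M.ground_finite
  have hfin' : M'.Finite := ⟨hE' ▸ hEfin⟩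
  -- M' rank of ground set is d
  have hrk'_le : ∀ S : Set α, M'.rankOf S ≤ d := by
    intro S
    rw [rankOf_le_iff hfin']
    intro I _ hI
    exact ((hIndep' I).1 hI).2
  have hr' : M'.rankOf M'.E = d := by
    refine le_antisymm (hrk'_le _) ?_
    obtain ⟨I, hIE, hI, hIcard⟩ := rankOf_mem hfin M.E
    obtain ⟨J, hJI, hJcard⟩ := Set.exists_subset_card_eq (n := d) (by omega : d ≤ I.ncard)
    have hJ : M'.Indep J := (hIndep' J).2 ⟨hI.subset hJI, le_of_eq hJcard⟩
    have := ncard_le_rankOf hfin' (S := M'.E) (hE' ▸ (hJI.trans hIE)) hJ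
    omega
  -- ranks agree below d
  have hrk_agree : ∀ (S : Set α) (i : ℕ), i < d → (M'.rankOf S ≤ i ↔ M.rankOf S ≤ i) := by
    intro S i hid
    rw [rankOf_le_iff hfin', rankOf_le_iff hfin]
    constructor
    · intro h I hIS hI
      by_contra hc
      push_neg at hc
      obtain ⟨J, hJI, hJcard⟩ := Set.exists_subset_card_eq (n := i + 1)
        (by omega : i + 1 ≤ I.ncard)
      have hJ : M'.Indep J := (hIndep' J).2 ⟨hI.subset hJI, by omega⟩
      have := h J (hJI.trans hIS) hJ
      omega
    · intro h I hIS hI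
      exact h I hIS ((hIndep' I).1 hI).1
  have hrk_le : ∀ S : Set α, S ⊆ M.E → M.rankOf S ≤ r := by
    intro S hS
    rw [rankOf_le_iff hfin]
    intro I hIS hI
    exact hr ▸ ncard_le_rankOf hfin (hIS.trans hS) hI
  -- the finset of subsets of the ground set
  set PP : Finset (Set α) := hEfin.finite_subsets.toFinset with hPP
  have hmem : ∀ S : Set α, S ∈ PP ↔ S ⊆ M.E := fun S => hEfin.finite_subsets.mem_toFinset
  have hcoe : {S : Set α | S ⊆ M.E} = ↑PP := (hEfin.finite_subsets.coe_toFinset).symm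
  -- charPoly as finset sums
  have hχ : M.charPoly =
      ∑ S ∈ PP, (-1 : ℤ) ^ S.ncard • (X : Polynomial ℤ) ^ (r - M.rankOf S) := by
    rw [Matroid.charPoly, hcoe, finsum_mem_coe_finset, hr]
  have hχ' : M'.charPoly =
      ∑ S ∈ PP, (-1 : ℤ) ^ S.ncard • (X : Polynomial ℤ) ^ (d - M'.rankOf S) := by
    have hr'' : M'.rankOf M.E = d := by rw [← hE']; exact hr'
    rw [Matroid.charPoly, hE', hcoe, finsum_mem_coe_finset, hr'']
  -- alternating sum over subsets vanishes
  have hc0 : ∑ S ∈ PP, (-1 : ℤ) ^ S.ncard = 0 := by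
    have himg : PP = hEfin.toFinset.powerset.image (fun t : Finset α => (↑t : Set α)) := by
      ext S
      simp only [hmem, Finset.mem_image, Finset.mem_powerset]
      constructor
      · intro hS
        refine ⟨(hEfin.subset hS).toFinset, ?_, (hEfin.subset hS).coe_toFinset⟩
        intro x hx
        rw [Set.Finite.mem_toFinset] at hx ⊢
        exact hS hx
      · rintro ⟨t, ht, rfl⟩ x hx
        rw [← Set.Finite.mem_toFinset hEfin]
        exact ht hx
    rw [himg, Finset.sum_image (fun a _ b _ h => Finset.coe_injective h)]
    have : ∀ t : Finset α, ((t : Set α)).ncard = t.card := fun t => Set.ncard_coe_finset t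
    simp only [this]
    refine Finset.sum_powerset_neg_one_pow_card_of_nonempty ?_
    obtain ⟨x, hx⟩ := hne
    exact ⟨x, hEfin.mem_toFinset.2 hx⟩
  -- the quotients
  refine ⟨∑ S ∈ PP, (-1 : ℤ) ^ S.ncard •
      (∑ k ∈ Finset.range (r - M.rankOf S), (X : Polynomial ℤ) ^ k),
    ∑ S ∈ PP, (-1 : ℤ) ^ S.ncard •
      (∑ k ∈ Finset.range (d - M'.rankOf S), (X : Polynomial ℤ) ^ k), ?_, ?_, ?_⟩
  · rw [hχ, Finset.mul_sum]
    rw [← sub_eq_zero]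
    rw [← Finset.sum_sub_distrib]
    have : ∀ S ∈ PP, ((-1 : ℤ) ^ S.ncard • (X : Polynomial ℤ) ^ (r - M.rankOf S) -
        ((X : Polynomial ℤ) - 1) * ((-1 : ℤ) ^ S.ncard •
          (∑ k ∈ Finset.range (r - M.rankOf S), (X : Polynomial ℤ) ^ k)))
        = (-1 : ℤ) ^ S.ncard • (1 : Polynomial ℤ) := by
      intro S _
      rw [mul_smul_comm, mul_comm ((X : Polynomial ℤ) - 1), geom_sum_mul, ← smul_sub]
      congr 1
      ring
    rw [Finset.sum_congr rfl this, ← Finset.sum_smul, hc0, zero_smul]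
  · rw [hχ', Finset.mul_sum]
    rw [← sub_eq_zero]
    rw [← Finset.sum_sub_distrib]
    have : ∀ S ∈ PP, ((-1 : ℤ) ^ S.ncard • (X : Polynomial ℤ) ^ (d - M'.rankOf S) -
        ((X : Polynomial ℤ) - 1) * ((-1 : ℤ) ^ S.ncard •
          (∑ k ∈ Finset.range (d - M'.rankOf S), (X : Polynomial ℤ) ^ k)))
        = (-1 : ℤ) ^ S.ncard • (1 : Polynomial ℤ) := by
      intro S _
      rw [mul_smul_comm, mul_comm ((X : Polynomial ℤ) - 1), geom_sum_mul, ← smul_sub]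
      congr 1
      ring
    rw [Finset.sum_congr rfl this, ← Finset.sum_smul, hc0, zero_smul]
  · intro i hi
    rw [Polynomial.finset_sum_coeff, Polynomial.finset_sum_coeff]
    refine Finset.sum_congr rfl ?_
    intro S hS
    rw [Polynomial.coeff_smul, Polynomial.coeff_smul, coeff_geomSum, coeff_geomSum]
    congr 1
    have h1 : M'.rankOf S ≤ d := hrk'_le S
    have h2 : M.rankOf S ≤ r := hrk_le S ((hmem S).1 hS)
    have h3 : M'.rankOf S ≤ i ↔ M.rankOf S ≤ i := hrk_agree S i (by omega)
    by_cases hcase : M.rankOf S ≤ i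
    · have h4 : M'.rankOf S ≤ i := h3.2 hcase
      rw [if_pos (by omega), if_pos (by omega : r - 1 - i < r - M.rankOf S)]
    · have : ¬ M'.rankOf S ≤ i := fun h => hcase (h3.1 h)
      rw [if_neg (by omega), if_neg (by omega : ¬ r - 1 - i < r - M.rankOf S)]
end
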